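/- arXiv:1410.0283 — 2 statements merged into one kernel-verified Lean document; each statement's English description precedes it below -/
import Mathlib

section
/- Let R = [[A,B],[C,D]] with A ∈ ℂ^{n×n} Schur stable and R*·diag(I_n,I_p)·R = diag(I_n,I_m). Then the transfer function F(z) = C(zI − A)^{-1}B + D satisfies (F(z))*F(z) = I_m for every z on the unit circle. -/
/-!
For `|z| = 1` put `X = (zI - A)⁻¹ B`, so that `A X + B = z X` and `F(z) = C X + D`. The realization
matrix `R = [[A, B], [C, D]]` is an isometry, hence preserves the Gram matrix of the block column
`[X; I]`: `(zX)ᴴ(zX) + F(z)ᴴ F(z) = XᴴX + I`, and `|z| = 1` cancels `XᴴX` on both sides.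
-/

open Matrix

namespace Matrix

variable {α : Type*} {n m p k : Type*} [Fintype n] [Fintype m] [Fintype p]

theorem conjTranspose_smul_mul_smul_of_norm_eq_one {z : ℂ} (hz : ‖z‖ = 1)
    (X : Matrix n k ℂ) : (z • X)ᴴ * (z • X) = Xᴴ * X := by
  have hzz : star z * z = 1 := by
    rw [Complex.star_def, mul_comm, Complex.mul_conj, Complex.normSq_eq_norm_sq, hz]
    norm_num
  rw [conjTranspose_smul, Matrix.smul_mul, Matrix.mul_smul, smul_smul, hzz, one_smul]

variable [DecidableEq n] [DecidableEq m]

theorem gram_blocks_eq_of_isometry [Semiring α] [StarRing α]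
    {A : Matrix n n α} {B : Matrix n m α} {C : Matrix p n α} {D : Matrix p m α}
    (h1 : Aᴴ * A + Cᴴ * C = 1) (h2 : Aᴴ * B + Cᴴ * D = 0) (h3 : Bᴴ * B + Dᴴ * D = 1)
    (X : Matrix n k α) (U : Matrix m k α) :
    (A * X + B * U)ᴴ * (A * X + B * U) + (C * X + D * U)ᴴ * (C * X + D * U) =
      Xᴴ * X + Uᴴ * U := by
  have h2' : Bᴴ * A + Dᴴ * C = 0 := by
    simpa only [conjTranspose_add, conjTranspose_mul, conjTranspose_conjTranspose,
      conjTranspose_zero] using congrArg conjTranspose h2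
  calc _ = Xᴴ * (Aᴴ * A + Cᴴ * C) * X + Xᴴ * (Aᴴ * B + Cᴴ * D) * U
          + Uᴴ * (Bᴴ * A + Dᴴ * C) * X + Uᴴ * (Bᴴ * B + Dᴴ * D) * U := by
        simp only [conjTranspose_add, conjTranspose_mul, Matrix.add_mul, Matrix.mul_add,
          Matrix.mul_assoc]
        abel
    _ = Xᴴ * X + Uᴴ * U := by
        simp only [h1, h2, h2', h3, Matrix.mul_one, Matrix.mul_zero, Matrix.zero_mul, add_zero]

theorem isUnit_smul_one_sub_of_notMem_spectrum [Field α] {A : Matrix n n α} {z : α}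
    (hz : z ∉ spectrum α A) : IsUnit (z • 1 - A) := by
  simpa [Algebra.algebraMap_eq_smul_one] using spectrum.notMem_iff.mp hz

theorem mul_inv_smul_one_sub_add_one [CommRing α] {A : Matrix n n α} {z : α}
    (hz : IsUnit (z • 1 - A)) : A * (z • 1 - A)⁻¹ + 1 = z • (z • 1 - A)⁻¹ := by
  have h := mul_nonsing_inv (z • 1 - A) ((isUnit_iff_isUnit_det _).mp hz)
  rw [Matrix.sub_mul, Matrix.smul_mul, Matrix.one_mul] at h
  exact (sub_eq_iff_eq_add'.mp h).symm

end Matrix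

theorem isometric_realization_paraunitary_general (n p m : ℕ)
    (A : Matrix (Fin n) (Fin n) ℂ) (B : Matrix (Fin n) (Fin m) ℂ)
    (C : Matrix (Fin p) (Fin n) ℂ) (D : Matrix (Fin p) (Fin m) ℂ)
    (hA : ∀ μ ∈ spectrum ℂ A, ‖μ‖ < 1)
    (h1 : Aᴴ * A + Cᴴ * C = 1) (h2 : Aᴴ * B + Cᴴ * D = 0)
    (h3 : Bᴴ * B + Dᴴ * D = 1) :
    ∀ z : ℂ, ‖z‖ = 1 →
      (C * (z • (1 : Matrix (Fin n) (Fin n) ℂ) - A)⁻¹ * B + D)ᴴ *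
        (C * (z • (1 : Matrix (Fin n) (Fin n) ℂ) - A)⁻¹ * B + D) = 1 := by
  intro z hz
  have hunit : IsUnit (z • 1 - A) :=
    isUnit_smul_one_sub_of_notMem_spectrum fun hmem => (hA z hmem).ne hz
  set X := (z • (1 : Matrix (Fin n) (Fin n) ℂ) - A)⁻¹ * B
  have hstate : A * X + B * (1 : Matrix (Fin m) (Fin m) ℂ) = z • X := by
    rw [Matrix.mul_one, ← Matrix.mul_assoc, ← Matrix.smul_mul,
      ← mul_inv_smul_one_sub_add_one hunit, Matrix.add_mul, Matrix.one_mul]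
  have hgram := gram_blocks_eq_of_isometry h1 h2 h3 X (1 : Matrix (Fin m) (Fin m) ℂ)
  rw [hstate, conjTranspose_smul_mul_smul_of_norm_eq_one hz, Matrix.mul_one, conjTranspose_one,
    Matrix.mul_one, add_right_inj] at hgram
  simpa only [X, Matrix.mul_assoc] using hgram

/-- If `R = [[A,B],[C,D]]` is an isometric realization matrix with `A` Schur
stable, then the transfer function `F(z) = C (zI - A)⁻¹ B + D` is isometric on
the unit circle. -/
theorem isometric_realization_paraunitary (n p m : ℕ) (hpm : m ≤ p)
    (A : Matrix (Fin n) (Fin n) ℂ) (B : Matrix (Fin n) (Fin m) ℂ)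
    (C : Matrix (Fin p) (Fin n) ℂ) (D : Matrix (Fin p) (Fin m) ℂ)
    (hA : ∀ μ ∈ spectrum ℂ A, ‖μ‖ < 1)
    (h1 : Aᴴ * A + Cᴴ * C = 1) (h2 : Aᴴ * B + Cᴴ * D = 0)
    (h3 : Bᴴ * B + Dᴴ * D = 1) :
    ∀ z : ℂ, ‖z‖ = 1 →
      (C * (z • (1 : Matrix (Fin n) (Fin n) ℂ) - A)⁻¹ * B + D)ᴴ *
        (C * (z • (1 : Matrix (Fin n) (Fin n) ℂ) - A)⁻¹ * B + D) = 1 :=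
  isometric_realization_paraunitary_general n p m A B C D hA h1 h2 h3
end

section
/- Let F₀(z) = ∑_{j=0}^γ z^j B_j be a matrix polynomial with p×m coefficients, p ≥ m, and H₀ the associated (γ+1)p×(γ+1)m block Hankel matrix with (i,j) block B_{i+j} (where B_k := 0 for k > γ). If (I_{m(γ+1)} − H₀*H₀)·[I_m; 0]ᵀ = 0 then the coefficients satisfy ∑_{j=0}^{γ-k} B_j* B_{j+k} = δ_{k,0} I_m for k = 0,…,γ, and consequently (F₀(z))* F₀(z) = I_m for all z on the unit circle. -/
open Matrix Finset

/-!
Block `(k, 0)` of `H₀ᴴ H₀` is `∑ᵢ B_{i+k}ᴴ B_i`, so the hypothesis says exactly that these block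
autocorrelations are `δ_{k,0} I_m`; their conjugate transposes are the stated identities.
For `|z| = 1` the coefficient `z̄ʲ zˡ` of `B_jᴴ B_l` in `F₀(z)ᴴ F₀(z)` depends only on `l - j`, so
summing along the diagonals of the `(j, l)` square turns `F₀(z)ᴴ F₀(z)` into
`∑ₖ zᵏ R_k + ∑ₖ z̄^(k+1) R_{k+1}ᴴ` with `R_k = ∑_j B_jᴴ B_{j+k} = δ_{k,0} I_m`.
-/

namespace Finset

variable {M : Type*} [AddCommMonoid M]

theorem sum_range_sum_Ico_eq_sum_diagonals (N : ℕ) (g : ℕ → ℕ → M) :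
    ∑ j ∈ range N, ∑ l ∈ Ico j N, g j l = ∑ k ∈ range N, ∑ j ∈ range (N - k), g j (j + k) := by
  simp_rw [sum_Ico_eq_sum_range]
  exact sum_comm' fun j k => by simp only [mem_range]; omega

theorem sum_range_sum_range_eq_sum_subdiagonals (N : ℕ) (g : ℕ → ℕ → M) :
    ∑ j ∈ range N, ∑ l ∈ range j, g j l =
      ∑ k ∈ range (N - 1), ∑ l ∈ range (N - (k + 1)), g (l + (k + 1)) l := by
  rw [sum_comm' (s := range N) (t := range) (t' := range N) (s' := fun l => Ico (l + 1) N)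
    fun j l => by simp only [mem_range, mem_Ico]; omega]
  simp_rw [sum_Ico_eq_sum_range]
  rw [sum_comm' (t' := range (N - 1)) (s' := fun k => range (N - (k + 1)))
    fun l k => by simp only [mem_range]; omega]
  simp_rw [add_assoc, add_comm 1]

end Finset

namespace Matrix

variable {R : Type*}

def blockHankel [Zero R] {p m : Type*} (B : ℕ → Matrix p m R) (N : ℕ) :
    Matrix (Fin N × p) (Fin N × m) R :=
  fun i j => B (i.1 + j.1) i.2 j.2

def blockUnitColumn [Zero R] [One R] {ι : Type*} (κ : Type*) [DecidableEq ι] [DecidableEq κ]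
    (i₀ : ι) : Matrix (ι × κ) κ R :=
  fun i j => if i.1 = i₀ ∧ i.2 = j then 1 else 0

theorem mul_blockUnitColumn_apply [NonAssocSemiring R] {ι κ μ : Type*} [Fintype ι] [Fintype κ]
    [DecidableEq ι] [DecidableEq κ] (A : Matrix μ (ι × κ) R) (i₀ : ι) (x : μ) (b : κ) :
    (A * blockUnitColumn (R := R) κ i₀) x b = A x (i₀, b) := by
  simp [mul_apply, blockUnitColumn, ← Prod.mk.injEq]

theorem blockHankel_conjTranspose_mul_self_apply [NonUnitalSemiring R] [Star R]
    {p m : Type*} [Fintype p] (B : ℕ → Matrix p m R) (N : ℕ) (k l : Fin N) (a b : m) :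
    ((blockHankel B N)ᴴ * blockHankel B N) (k, a) (l, b) =
      (∑ i ∈ range N, (B (i + k))ᴴ * B (i + l)) a b := by
  rw [mul_apply, Fintype.sum_prod_type, sum_apply,
    ← Fin.sum_univ_eq_sum_range (fun i => ((B (i + k))ᴴ * B (i + l)) a b)]
  simp [mul_apply, blockHankel]

theorem sum_range_conjTranspose_shift_mul_eq_of_blockHankel [Ring R] [Star R]
    {p m : Type*} [Fintype p] [Fintype m] [DecidableEq m] {B : ℕ → Matrix p m R} {N : ℕ}
    [NeZero N]
    (h : (1 - (blockHankel B N)ᴴ * blockHankel B N) * blockUnitColumn (R := R) m (0 : Fin N) = 0)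
    (k : ℕ) (hk : k < N) :
    ∑ i ∈ range N, (B (i + k))ᴴ * B i = if k = 0 then 1 else 0 := by
  ext a b
  have hkab := congrFun (congrFun h (⟨k, hk⟩, a)) b
  rw [mul_blockUnitColumn_apply, Matrix.sub_apply, blockHankel_conjTranspose_mul_self_apply,
    Matrix.zero_apply, sub_eq_zero] at hkab
  simpa [one_apply, Prod.ext_iff, Fin.ext_iff, ite_and, apply_ite (fun M : Matrix _ _ R => M a b)]
    using hkab.symm

theorem sum_range_sub_conjTranspose_mul_shift [NonUnitalSemiring R] [StarRing R]
    {p m : Type*} [Fintype p] {B : ℕ → Matrix p m R} {N : ℕ} (hB : ∀ k, N ≤ k → B k = 0) (k : ℕ) :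
    ∑ j ∈ range (N - k), (B j)ᴴ * B (j + k) = (∑ i ∈ range N, (B (i + k))ᴴ * B i)ᴴ := by
  simp only [conjTranspose_sum, conjTranspose_mul, conjTranspose_conjTranspose]
  refine sum_subset (range_subset_range.2 (Nat.sub_le N k)) fun j hj hjk => ?_
  simp only [mem_range] at hj hjk
  rw [hB (j + k) (by omega), Matrix.mul_zero]

theorem conjTranspose_sum_smul_mul_sum_smul [CommSemiring R] [StarRing R]
    {ι p m : Type*} [Fintype p] (s : Finset ι) (c : ι → R) (B : ι → Matrix p m R) :
    (∑ j ∈ s, c j • B j)ᴴ * (∑ l ∈ s, c l • B l) =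
      ∑ j ∈ s, ∑ l ∈ s, (star (c j) * c l) • ((B j)ᴴ * B l) := by
  rw [conjTranspose_sum, Matrix.sum_mul]
  refine sum_congr rfl fun j _ => ?_
  rw [conjTranspose_smul, Matrix.mul_sum]
  refine sum_congr rfl fun l _ => ?_
  rw [Matrix.smul_mul, Matrix.mul_smul, smul_smul]

theorem conjTranspose_sum_pow_smul_mul_self_eq_one [CommRing R] [StarRing R]
    {p m : Type*} [Fintype p] [Fintype m] [DecidableEq m] {B : ℕ → Matrix p m R} {N : ℕ}
    (hN : 0 < N)
    (hB : ∀ k < N, ∑ j ∈ range (N - k), (B j)ᴴ * B (j + k) = if k = 0 then 1 else 0)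
    {z : R} (hz : star z * z = 1) :
    (∑ j ∈ range N, z ^ j • B j)ᴴ * (∑ j ∈ range N, z ^ j • B j) = 1 := by
  have split : ∀ j ∈ range N, ∑ l ∈ range N, (star (z ^ j) * z ^ l) • ((B j)ᴴ * B l) =
      ∑ l ∈ range j, (star (z ^ j) * z ^ l) • ((B j)ᴴ * B l) +
        ∑ l ∈ Ico j N, (star (z ^ j) * z ^ l) • ((B j)ᴴ * B l) := fun j hj =>
    (sum_range_add_sum_Ico _ (mem_range.1 hj).le).symm
  have below (k l : ℕ) : star z ^ (l + k) * z ^ l = star z ^ k := by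
    rw [pow_add, mul_right_comm, ← mul_pow, hz, one_pow, one_mul]
  have above (k j : ℕ) : star z ^ j * z ^ (j + k) = z ^ k := by
    rw [pow_add, ← mul_assoc, ← mul_pow, hz, one_pow, one_mul]
  rw [conjTranspose_sum_smul_mul_sum_smul, sum_congr rfl split, sum_add_distrib,
    sum_range_sum_range_eq_sum_subdiagonals, sum_range_sum_Ico_eq_sum_diagonals]
  simp only [star_pow, below, above, ← smul_sum]
  have lower : ∀ k ∈ range (N - 1), ∑ l ∈ range (N - (k + 1)), (B (l + (k + 1)))ᴴ * B l = 0 :=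
    fun k hk => by
      have := congrArg conjTranspose (hB (k + 1) (by simp only [mem_range] at hk; omega))
      simpa [conjTranspose_sum] using this
  rw [sum_congr rfl fun k hk => by rw [lower k hk, smul_zero], sum_const_zero, zero_add,
    sum_congr rfl fun k hk => by rw [hB k (mem_range.1 hk)]]
  simp [hN]

end Matrix

theorem hankel_condition_implies_paraunitary_general (p m γ : ℕ)
    (B : ℕ → Matrix (Fin p) (Fin m) ℂ) (hB : ∀ k, γ < k → B k = 0)
    (H₀ : Matrix (Fin (γ + 1) × Fin p) (Fin (γ + 1) × Fin m) ℂ)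
    (hH₀ : ∀ i j, H₀ i j = B ((i.1 : ℕ) + (j.1 : ℕ)) i.2 j.2)
    (E : Matrix (Fin (γ + 1) × Fin m) (Fin m) ℂ)
    (hE : ∀ i j, E i j = if i.1 = 0 ∧ i.2 = j then 1 else 0)
    (h : ((1 : Matrix (Fin (γ + 1) × Fin m) (Fin (γ + 1) × Fin m) ℂ) -
        H₀ᴴ * H₀) * E = 0) :
    (∀ k ≤ γ, ∑ j ∈ range (γ + 1 - k), (B j)ᴴ * B (j + k) =
        if k = 0 then 1 else 0) ∧
    ∀ z : ℂ, ‖z‖ = 1 →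
      (∑ j ∈ range (γ + 1), z ^ j • B j)ᴴ * (∑ j ∈ range (γ + 1), z ^ j • B j) =
        1 := by
  have hH : H₀ = blockHankel B (γ + 1) := Matrix.ext hH₀
  have hEcol : E = blockUnitColumn (Fin m) (0 : Fin (γ + 1)) := Matrix.ext hE
  subst hH hEcol
  have corr : ∀ k ≤ γ, ∑ j ∈ range (γ + 1 - k), (B j)ᴴ * B (j + k) = if k = 0 then 1 else 0 := by
    intro k hk
    rw [sum_range_sub_conjTranspose_mul_shift hB k,
      sum_range_conjTranspose_shift_mul_eq_of_blockHankel h k (by omega)]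
    split_ifs <;> simp
  refine ⟨corr, fun z hz => conjTranspose_sum_pow_smul_mul_self_eq_one γ.succ_pos
    (fun k hk => corr k (by omega)) ?_⟩
  rw [Complex.star_def, Complex.conj_mul', hz]
  norm_num

/-- For a matrix polynomial `F₀(z) = ∑_{j=0}^γ z^j B_j` (`p×m` coefficients,
`B_k = 0` for `k > γ`) with associated block Hankel matrix `H₀` whose `(i,j)`
block is `B_{i+j}`: if `(I - H₀ᴴH₀)·[I_m; 0] = 0`, then
`∑_j B_jᴴ B_{j+k} = δ_{k,0} I_m` for `0 ≤ k ≤ γ`, and consequently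
`F₀(z)ᴴ F₀(z) = I_m` on the unit circle. -/
theorem hankel_condition_implies_paraunitary (p m γ : ℕ) (hpm : m ≤ p)
    (B : ℕ → Matrix (Fin p) (Fin m) ℂ) (hB : ∀ k, γ < k → B k = 0)
    (H₀ : Matrix (Fin (γ + 1) × Fin p) (Fin (γ + 1) × Fin m) ℂ)
    (hH₀ : ∀ i j, H₀ i j = B ((i.1 : ℕ) + (j.1 : ℕ)) i.2 j.2)
    (E : Matrix (Fin (γ + 1) × Fin m) (Fin m) ℂ)
    (hE : ∀ i j, E i j = if i.1 = 0 ∧ i.2 = j then 1 else 0)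
    (h : ((1 : Matrix (Fin (γ + 1) × Fin m) (Fin (γ + 1) × Fin m) ℂ) -
        H₀ᴴ * H₀) * E = 0) :
    (∀ k ≤ γ, ∑ j ∈ range (γ + 1 - k), (B j)ᴴ * B (j + k) =
        if k = 0 then 1 else 0) ∧
    ∀ z : ℂ, ‖z‖ = 1 →
      (∑ j ∈ range (γ + 1), z ^ j • B j)ᴴ * (∑ j ∈ range (γ + 1), z ^ j • B j) =
        1 :=
  hankel_condition_implies_paraunitary_general p m γ B hB H₀ hH₀ E hE h
end
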